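/- Let X be the vertex tree-shift determined by n×n 0-1 matrices A_0 and A_1 whose graph representation is essential. If A_0 is irreducible and A_1 ≥ A_0 entrywise, or A_1 is irreducible and A_0 ≥ A_1 entrywise, then X is irreducible. -/

import Mathlib

/-!  Tree-shifts on the binary tree: basic definitions. -/

/-- An infinite tree over alphabet `A`: a labeling of all finite words over
`Σ = {0,1}` (encoded as `List Bool`). -/
abbrev InfTree (A : Type*) : Type _ := List Bool → A

/-- The shift map `σ_w`: `(σ_w t)_x = t_{wx}`. -/
def treeShift {A : Type*} (w : List Bool) (t : InfTree A) : InfTree A :=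
  fun x => t (w ++ x)

/-- A pattern: a labeling of a finite prefix-closed set of words. -/
structure TreePattern (A : Type*) where
  supp : Finset (List Bool)
  prefixClosed : ∀ x ∈ supp, ∀ y : List Bool, y <+: x → y ∈ supp
  label : (x : List Bool) → x ∈ supp → A

/-- The pattern `p` occurs in the tree `t` rooted at the node `x`. -/
def TreePattern.occursAt {A : Type*} (p : TreePattern A) (t : InfTree A) (x : List Bool) : Prop :=
  ∀ y (hy : y ∈ p.supp), p.label y hy = t (x ++ y)

/-- The tree-shift `X_F` defined by a set `F` of forbidden patterns. -/
def treeShiftOf {A : Type*} (F : Set (TreePattern A)) : Set (InfTree A) :=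
  { t | ∀ p ∈ F, ∀ x : List Bool, ¬ p.occursAt t x }

/-- A subset of trees is a tree-shift if it is `X_F` for some forbidden set `F`. -/
def IsTreeShift {A : Type*} (X : Set (InfTree A)) : Prop :=
  ∃ F : Set (TreePattern A), X = treeShiftOf F

/-- A tree-shift of finite type: `X_F` for some finite forbidden set `F`. -/
def IsTSFT {A : Type*} (X : Set (InfTree A)) : Prop :=
  ∃ F : Set (TreePattern A), F.Finite ∧ X = treeShiftOf F

/-- A Markov tree-shift: `X_F` for a finite forbidden set `F` consisting of 2-blocks,
i.e. patterns with support `Σ_1 = {ε, 0, 1}`. -/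
def IsMarkovTS {A : Type*} (X : Set (InfTree A)) : Prop :=
  ∃ F : Set (TreePattern A), F.Finite ∧
    (∀ p ∈ F, p.supp = ({[], [false], [true]} : Finset (List Bool))) ∧
    X = treeShiftOf F

/-- The `n`-block of `t` rooted at `x` equals `u`; an `n`-block is recorded as a function
on all words, only its values on words of length `< n` (i.e. on `Σ_{n-1}`) are relevant. -/
def blockEqAt {A : Type*} (t : InfTree A) (x : List Bool) (n : ℕ) (u : List Bool → A) : Prop :=
  ∀ y : List Bool, y.length < n → t (x ++ y) = u y

/-- `u ∈ B_n(X)` : the `n`-block `u` appears in some tree of `X`. -/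
def memBlocks {A : Type*} (X : Set (InfTree A)) (n : ℕ) (u : List Bool → A) : Prop :=
  ∃ t ∈ X, ∃ x : List Bool, blockEqAt t x n u

/-- The maximal length `|P|` of a word in a finite set of words `P`. -/
def maxLen (P : Finset (List Bool)) : ℕ := P.sup List.length

/-- `P` is a complete prefix set (CPS): it is a prefix set (no word of `P` is a prefix of
another word of `P`) and every word of length at least `|P|` has a prefix in `P`. -/
def IsCPS (P : Finset (List Bool)) : Prop :=
  (∀ p ∈ P, ∀ q ∈ P, p <+: q → p = q) ∧
  (∀ x : List Bool, maxLen P ≤ x.length → ∃ p ∈ P, p <+: x)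

/-- Irreducibility of a tree-shift: any two `n`-blocks `u, v` of `X` can be realized in a
single tree of `X`, with `u` rooted at `ε` and `v` rooted at every word of a CPS whose
words have length at least `n`. -/
def IrreducibleTS {A : Type*} (X : Set (InfTree A)) : Prop :=
  ∀ n : ℕ, 0 < n → ∀ u v : List Bool → A, memBlocks X n u → memBlocks X n v →
    ∃ t ∈ X, ∃ P : Finset (List Bool), IsCPS P ∧ (∀ x ∈ P, n ≤ x.length) ∧
      blockEqAt t [] n u ∧ ∀ x ∈ P, blockEqAt t x n v

/-- Mixing for tree-shifts: there are two CPS `P_0, P_1` connecting any two blocks, the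
choice of the CPS being governed by the last letter `w_{n-1}` of `w ∈ Σ^{n-1}`. -/
def MixingTS {A : Type*} (X : Set (InfTree A)) : Prop :=
  ∃ P0 P1 : Finset (List Bool), IsCPS P0 ∧ IsCPS P1 ∧
    ∀ n m : ℕ, 0 < n → 0 < m → ∀ u v : List Bool → A,
      memBlocks X n u → memBlocks X m v →
      ∃ t ∈ X, blockEqAt t [] n u ∧
        ∀ w : List Bool, w.length = n - 1 → ∀ b : Bool, w.getLast? = some b →
          ∀ x ∈ (if b then P1 else P0), blockEqAt t (w ++ x) m v

/-- A periodic tree: `σ_x t = t` for all `x` in some complete prefix set. -/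
def IsPeriodicTree {A : Type*} (t : InfTree A) : Prop :=
  ∃ P : Finset (List Bool), IsCPS P ∧ ∀ x ∈ P, treeShift x t = t

/-- The metric on trees: `d(t,t') = 2^{-n}` where `n` is the least length of a
disagreement, and `d(t,t') = 0` if `t = t'`. -/
noncomputable def treeDist {A : Type*} (t t' : InfTree A) : ℝ :=
  haveI := Classical.propDecidable (t = t')
  if t = t' then 0
  else (2⁻¹ : ℝ) ^ sInf { n : ℕ | ∃ x : List Bool, x.length = n ∧ t x ≠ t' x }

/-- `U` is an open subset of `X` in the topology induced by the metric `treeDist`. -/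
def IsOpenIn {A : Type*} (X U : Set (InfTree A)) : Prop :=
  U ⊆ X ∧ ∀ t ∈ U, ∃ ε : ℝ, 0 < ε ∧ ∀ t' ∈ X, treeDist t t' < ε → t' ∈ U

/-- The `m`-block of `t` rooted at `x`, as a function on `Σ_{m-1}`. -/
def blockFun {A : Type*} (m : ℕ) (t : InfTree A) (x : List Bool) :
    { y : List Bool // y.length < m } → A :=
  fun y => t (x ++ y.1)

/-- `φ` is a sliding block code on `X`: it is induced by a local `m`-block map `Φ`. -/
def IsSlidingBlockCode {A B : Type*} (X : Set (InfTree A)) (φ : InfTree A → InfTree B) : Prop :=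
  ∃ m : ℕ, 0 < m ∧ ∃ Φ : ({ y : List Bool // y.length < m } → A) → B,
    ∀ t ∈ X, ∀ x : List Bool, φ t x = Φ (blockFun m t x)

/-- `φ` is a conjugacy from `X` onto `Y`: an invertible sliding block code whose inverse
is also a sliding block code. -/
def IsConjugacy {A B : Type*} (X : Set (InfTree A)) (Y : Set (InfTree B))
    (φ : InfTree A → InfTree B) : Prop :=
  IsSlidingBlockCode X φ ∧ Set.MapsTo φ X Y ∧
    ∃ ψ : InfTree B → InfTree A, IsSlidingBlockCode Y ψ ∧ Set.MapsTo ψ Y X ∧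
      (∀ t ∈ X, ψ (φ t) = t) ∧ (∀ s ∈ Y, φ (ψ s) = s)

/-- The `m`-th higher block code `φ_m`, sending `t` to the tree of `m`-blocks of `t`. -/
def higherBlockMap {A : Type*} (m : ℕ) (t : InfTree A) :
    InfTree ({ y : List Bool // y.length < m } → A) :=
  fun x => blockFun m t x

/-- The vertex tree-shift determined by two transition matrices `A_0, A_1`. -/
def vertexTreeShift {n : ℕ} (A0 A1 : Matrix (Fin n) (Fin n) ℕ) : Set (InfTree (Fin n)) :=
  { t | ∀ x : List Bool,
      A0 (t x) (t (x ++ [false])) = 1 ∧ A1 (t x) (t (x ++ [true])) = 1 }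

/-- `A_x = A_{x_l} A_{x_{l-1}} ⋯ A_{x_1}` for a word `x = x_1 … x_l`. -/
def matWord {n : ℕ} (A0 A1 : Matrix (Fin n) (Fin n) ℕ) :
    List Bool → Matrix (Fin n) (Fin n) ℕ
  | [] => 1
  | b :: rest => matWord A0 A1 rest * (if b then A1 else A0)

/-- A 0-1 matrix. -/
def ZeroOne {n : ℕ} (M : Matrix (Fin n) (Fin n) ℕ) : Prop := ∀ i j, M i j ≤ 1

/-- The graph representation of the pair `(A_0, A_1)` is essential: every row and every
column of each matrix contains a nonzero entry. -/
def EssentialPair {n : ℕ} (A0 A1 : Matrix (Fin n) (Fin n) ℕ) : Prop :=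
  (∀ i, ∃ j, 0 < A0 i j) ∧ (∀ j, ∃ i, 0 < A0 i j) ∧
  (∀ i, ∃ j, 0 < A1 i j) ∧ (∀ j, ∃ i, 0 < A1 i j)

/-- An irreducible nonnegative matrix. -/
def MatIrreducible {n : ℕ} (A : Matrix (Fin n) (Fin n) ℕ) : Prop :=
  ∀ i j, ∃ k : ℕ, 1 ≤ k ∧ 0 < (A ^ k) i j

/-- A primitive nonnegative matrix. -/
def MatPrimitive {n : ℕ} (A : Matrix (Fin n) (Fin n) ℕ) : Prop :=
  ∃ k : ℕ, 1 ≤ k ∧ ∀ i j, 0 < (A ^ k) i j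

/-- `V_w`: the set of possible terminal states of the labeled path `w`. -/
def Vset {n : ℕ} (M : Matrix (Fin n) (Fin n) ℕ) : Set (Fin n) := { j | ∃ i, 0 < M i j }

/-- A cycle: a word `w = w_1 … w_k` with `k ≥ 2`, `w_k = w_1` and `V_w = V_{w_1}`. -/
def IsCycle {n : ℕ} (A0 A1 : Matrix (Fin n) (Fin n) ℕ) (w : List Bool) : Prop :=
  2 ≤ w.length ∧ w.getLast? = w.head? ∧
    Vset (matWord A0 A1 w) = Vset (matWord A0 A1 (w.take 1))

/-!
Let `B` be the irreducible one of `A_0, A_1`; as it is dominated by the other, every `B`-walk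
can be followed along both the `0`- and the `1`-edges. To connect an `m`-block `u` to an
`m`-block `v`, keep `u` down to depth `m - 1`; below each node `w` of that depth, label a whole
level by each state of a `B`-walk of length `K ≥ 1` from the label of `w` to the root label
of `v`, then graft a tree carrying `v` at its root under every node of the last level. The
nodes where these copies start form a complete prefix set, because their depth depends only
on their ancestor at depth `m - 1`.
-/

theorem exists_walk_of_pow_pos {ι : Type*} [Fintype ι] [DecidableEq ι]
    (B : Matrix ι ι ℕ) {k : ℕ} {i j : ι} (h : 0 < (B ^ k) i j) :
    ∃ f : ℕ → ι, f 0 = i ∧ f k = j ∧ ∀ m < k, 0 < B (f m) (f (m + 1)) := by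
  induction k generalizing j with
  | zero =>
    obtain rfl : i = j := by
      by_contra hij
      simp [Matrix.one_apply_ne hij] at h
    exact ⟨fun _ => i, rfl, rfl, fun m hm => absurd hm m.not_lt_zero⟩
  | succ k ih =>
    rw [pow_succ, Matrix.mul_apply, Finset.sum_pos_iff] at h
    obtain ⟨c, -, hc⟩ := h
    obtain ⟨hic, hcj⟩ := CanonicallyOrderedAdd.mul_pos.mp hc
    obtain ⟨f, hf0, hfk, hf⟩ := ih hic
    refine ⟨Function.update f (k + 1) j, by simp [hf0], by simp, fun m hm => ?_⟩
    rw [Function.update_of_ne (by omega)]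
    rcases Nat.lt_succ_iff_lt_or_eq.mp hm with hm | rfl
    · rw [Function.update_of_ne (by omega)]
      exact hf m hm
    · rwa [Function.update_self, hfk]

theorem MatIrreducible.exists_walk {n : ℕ} {B : Matrix (Fin n) (Fin n) ℕ}
    (hB : MatIrreducible B) (i j : Fin n) :
    ∃ k, 1 ≤ k ∧ ∃ f : ℕ → Fin n, f 0 = i ∧ f k = j ∧ ∀ m < k, 0 < B (f m) (f (m + 1)) := by
  obtain ⟨k, hk, hpos⟩ := hB i j
  exact ⟨k, hk, exists_walk_of_pow_pos B hpos⟩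

theorem isCPS_of_mem_iff {P : Finset (List Bool)} {d : ℕ} {k : List Bool → ℕ}
    (hP : ∀ x, x ∈ P ↔ x.length = d + k (x.take d)) : IsCPS P := by
  have hmax : ∀ w : List Bool, w.length = d → d + k w ≤ maxLen P := fun w hw => by
    have hmem : w ++ List.replicate (k w) false ∈ P := by simp [hP, List.take_left' hw, hw]
    have hle := Finset.le_sup (f := List.length) hmem
    rw [List.length_append, List.length_replicate, hw] at hle
    exact hle
  refine ⟨fun p hp q hq hpq => hpq.eq_of_length ?_, fun x hx => ?_⟩
  · rw [hP] at hp hq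
    have htake : p.take d = q.take d := (hpq.take d).eq_of_length (by simp; omega)
    rw [hp, hq, htake]
  · have hd : d ≤ x.length := (Nat.le_add_right _ _).trans
      ((hmax (List.replicate d false) (by simp)).trans hx)
    have hw : (x.take d).length = d := by simp [hd]
    have hlen := (hmax _ hw).trans hx
    refine ⟨x.take (d + k (x.take d)), ?_, List.take_prefix _ _⟩
    rw [hP, List.take_take, min_eq_left (Nat.le_add_right _ _)]
    simp [hlen]

theorem exists_finset_mem_iff_length_eq (d N : ℕ) (k : List Bool → ℕ) (hk : ∀ w, k w ≤ N) :
    ∃ P : Finset (List Bool), ∀ x, x ∈ P ↔ x.length = d + k (x.take d) := by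
  classical
  refine ⟨(List.finite_length_le Bool (d + N)).toFinset.filter
    (fun x => x.length = d + k (x.take d)), fun x => ?_⟩
  simp only [Finset.mem_filter, Set.Finite.mem_toFinset, Set.mem_ofPred_eq, and_iff_right_iff_imp]
  have := hk (x.take d)
  omega

section Trees

variable {A : Type*}

def graft (s : InfTree A) (d : ℕ) (g : List Bool → InfTree A) : InfTree A :=
  fun x => if x.length < d then s x else g (x.take d) (x.drop d)

theorem graft_append {s : InfTree A} {d : ℕ} {g : List Bool → InfTree A} {w : List Bool}
    (hw : w.length = d) (z : List Bool) : graft s d g (w ++ z) = g w z := by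
  simp [graft, List.take_left' hw, List.drop_left' hw, hw]

theorem graft_of_length_le {s : InfTree A} {d : ℕ} {g : List Bool → InfTree A}
    (hroot : ∀ w : List Bool, w.length = d → g w [] = s w) {x : List Bool}
    (hx : x.length ≤ d) : graft s d g x = s x := by
  rcases hx.lt_or_eq with hx | hx
  · simp [graft, hx]
  · simpa using (graft_append (s := s) (g := g) hx []).trans (hroot x hx)

def prependPath (f : ℕ → A) (k : ℕ) (s : InfTree A) : InfTree A :=
  fun x => if x.length < k then f x.length else s (x.drop k)

theorem prependPath_append {f : ℕ → A} {k : ℕ} {s : InfTree A} {z : List Bool}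
    (hz : z.length = k) (y : List Bool) : prependPath f k s (z ++ y) = s y := by
  simp [prependPath, List.drop_left' hz, hz]

theorem prependPath_of_length_le {f : ℕ → A} {k : ℕ} {s : InfTree A} (hfk : f k = s [])
    {x : List Bool} (hx : x.length ≤ k) : prependPath f k s x = f x.length := by
  rcases hx.lt_or_eq with hx | hx
  · simp [prependPath, hx]
  · simp [prependPath, hx, hfk, List.drop_eq_nil_of_le hx.le]

end Trees

section VertexTreeShift

variable {n : ℕ} {A0 A1 : Matrix (Fin n) (Fin n) ℕ}

theorem treeShift_mem_vertexTreeShift {t : InfTree (Fin n)}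
    (ht : t ∈ vertexTreeShift A0 A1) (w : List Bool) :
    treeShift w t ∈ vertexTreeShift A0 A1 := fun x => by
  simpa [treeShift, List.append_assoc] using ht (w ++ x)

theorem graft_mem_vertexTreeShift {s : InfTree (Fin n)} {d : ℕ}
    {g : List Bool → InfTree (Fin n)} (hs : s ∈ vertexTreeShift A0 A1)
    (hg : ∀ w : List Bool, w.length = d → g w ∈ vertexTreeShift A0 A1)
    (hroot : ∀ w : List Bool, w.length = d → g w [] = s w) :
    graft s d g ∈ vertexTreeShift A0 A1 := by
  intro x
  by_cases hx : x.length < d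
  · have hchild : ∀ b, graft s d g (x ++ [b]) = s (x ++ [b]) := fun b =>
      graft_of_length_le hroot (by simp; omega)
    rw [graft_of_length_le hroot hx.le, hchild, hchild]
    exact hs x
  · have hw : (x.take d).length = d := by simp; omega
    rw [← List.take_append_drop d x, List.append_assoc, List.append_assoc, graft_append hw,
      graft_append hw, graft_append hw]
    exact hg _ hw _

theorem prependPath_mem_vertexTreeShift {f : ℕ → Fin n} {k : ℕ} {s : InfTree (Fin n)}
    (hs : s ∈ vertexTreeShift A0 A1)
    (hf : ∀ j < k, A0 (f j) (f (j + 1)) = 1 ∧ A1 (f j) (f (j + 1)) = 1) (hfk : f k = s []) :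
    prependPath f k s ∈ vertexTreeShift A0 A1 := by
  intro x
  by_cases hx : x.length < k
  · have hchild : ∀ b, prependPath f k s (x ++ [b]) = f (x.length + 1) := fun b => by
      rw [prependPath_of_length_le hfk (by simp; omega), List.length_append, List.length_singleton]
    rw [prependPath_of_length_le hfk hx.le, hchild, hchild]
    exact hf _ hx
  · have hz : (x.take k).length = k := by simp; omega
    rw [← List.take_append_drop k x, List.append_assoc, List.append_assoc, prependPath_append hz,
      prependPath_append hz, prependPath_append hz]
    exact hs _

theorem irreducibleTS_vertexTreeShift_of_matIrreducible {B : Matrix (Fin n) (Fin n) ℕ}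
    (hB : MatIrreducible B) (hBA : ∀ i j, 0 < B i j → A0 i j = 1 ∧ A1 i j = 1) :
    IrreducibleTS (vertexTreeShift A0 A1) := by
  rintro m hm u v ⟨tu, htu, xu, hu⟩ ⟨tv, htv, xv, hv⟩
  set su := treeShift xu tu
  set sv := treeShift xv tv
  choose K hK f hf0 hfK hfB using fun a => hB.exists_walk a (sv [])
  have hroot : ∀ w : List Bool, w.length = m - 1 →
      prependPath (f (su w)) (K (su w)) sv [] = su w := fun w _ => by
    rw [prependPath_of_length_le (hfK _) (Nat.zero_le _), List.length_nil, hf0]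
  have htX : graft su (m - 1) (fun w => prependPath (f (su w)) (K (su w)) sv) ∈
      vertexTreeShift A0 A1 :=
    graft_mem_vertexTreeShift (treeShift_mem_vertexTreeShift htu xu)
      (fun w _ => prependPath_mem_vertexTreeShift (treeShift_mem_vertexTreeShift htv xv)
        (fun j hj => hBA _ _ (hfB _ j hj)) (hfK _)) hroot
  obtain ⟨P, hP⟩ := exists_finset_mem_iff_length_eq (m - 1) (Finset.univ.sup K)
    (fun w => K (su w)) fun w => Finset.le_sup (f := K) (Finset.mem_univ (su w))
  refine ⟨_, htX, P, isCPS_of_mem_iff (k := fun w => K (su w)) hP, fun x hx => ?_,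
    fun y hy => ?_, fun x hx y hy => ?_⟩
  · have := hK (su (x.take (m - 1)))
    rw [hP] at hx
    omega
  · rw [List.nil_append, graft_of_length_le hroot (by omega)]
    exact hu y hy
  · rw [hP] at hx
    have hw : (x.take (m - 1)).length = m - 1 := by simp; omega
    have hz : (x.drop (m - 1)).length = K (su (x.take (m - 1))) := by simp [hx]
    rw [← List.take_append_drop (m - 1) x, List.append_assoc, graft_append hw,
      prependPath_append hz]
    exact hv y hy

end VertexTreeShift

theorem vertexTreeShift_irreducible_of_le_general {n : ℕ}
    (A0 A1 : Matrix (Fin n) (Fin n) ℕ) (h0 : ZeroOne A0) (h1 : ZeroOne A1)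
    (h : (MatIrreducible A0 ∧ ∀ i j, A0 i j ≤ A1 i j) ∨
         (MatIrreducible A1 ∧ ∀ i j, A1 i j ≤ A0 i j)) :
    IrreducibleTS (vertexTreeShift A0 A1) := by
  rcases h with ⟨hirr, hle⟩ | ⟨hirr, hle⟩
  · exact irreducibleTS_vertexTreeShift_of_matIrreducible hirr fun i j hij =>
      ⟨le_antisymm (h0 i j) hij, le_antisymm (h1 i j) (hij.trans_le (hle i j))⟩
  · exact irreducibleTS_vertexTreeShift_of_matIrreducible hirr fun i j hij =>
      ⟨le_antisymm (h0 i j) (hij.trans_le (hle i j)), le_antisymm (h1 i j) hij⟩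

/-- if one transition matrix is irreducible and is dominated by the other,
the (essential) vertex tree-shift is irreducible. -/
theorem vertexTreeShift_irreducible_of_le {n : ℕ}
    (A0 A1 : Matrix (Fin n) (Fin n) ℕ) (h0 : ZeroOne A0) (h1 : ZeroOne A1)
    (hess : EssentialPair A0 A1)
    (h : (MatIrreducible A0 ∧ ∀ i j, A0 i j ≤ A1 i j) ∨
         (MatIrreducible A1 ∧ ∀ i j, A1 i j ≤ A0 i j)) :
    IrreducibleTS (vertexTreeShift A0 A1) :=
  vertexTreeShift_irreducible_of_le_general A0 A1 h0 h1 h
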